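/- arXiv:0704.2808 — 8 statements merged into one kernel-verified Lean document; each statement's English description precedes it below -/
import Mathlib

section
/- Let f : 2^{[n]} → ℝ be a supermodular set function (f(A)+f(B) ≤ f(A∪B)+f(A∩B)) with f(∅)=0, and suppose R ∈ ℝ^n satisfies ∑_{i∈S} R_i ≥ f(S) for every proper subset S ⊂ [n] and ∑_{i=1}^n R_i > f([n]). Then there exists an index j* ∈ [n] such that every constraint ∑_{i∈S} R_i ≥ f(S) with j* ∈ S is strict. -/
/-!
Call a set `S` tight when `f S = ∑ i ∈ S, R i`. Once `f ≤ ∑ R` on every set, supermodularity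
makes tight sets closed under union, so (with `∅` tight) there is a largest tight set `T`.
Since the constraint for `[n]` is strict, `T ≠ [n]`, and any `j ∉ T` works: a set containing `j`
is not contained in `T`, hence not tight.
-/

lemma SupClosed.exists_isGreatest {β : Type*} [SemilatticeSup β] [Finite β] {s : Set β}
    (hs : SupClosed s) (hne : s.Nonempty) : ∃ a, IsGreatest s a := by
  obtain ⟨a, has, hmax⟩ := s.toFinite.exists_maximal hne
  exact ⟨a, has, fun b hb => le_sup_right.trans (hmax (hs has hb) le_sup_left)⟩

section Tight

variable {α : Type*} (f : Finset α → ℝ) (R : α → ℝ)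

def IsTight (S : Finset α) : Prop := f S = ∑ i ∈ S, R i

variable {f R} [DecidableEq α]

lemma supClosed_isTight (hsuper : ∀ A B, f A + f B ≤ f (A ∪ B) + f (A ∩ B))
    (hle : ∀ S, f S ≤ ∑ i ∈ S, R i) : SupClosed {S | IsTight f R S} := by
  intro A (hA : f A = _) B (hB : f B = _)
  show f (A ∪ B) = ∑ i ∈ A ∪ B, R i
  have hcap := hle (A ∩ B)
  have hsum : ∑ i ∈ A ∪ B, R i + ∑ i ∈ A ∩ B, R i = ∑ i ∈ A, R i + ∑ i ∈ B, R i :=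
    Finset.sum_union_inter
  exact le_antisymm (hle _) (by linarith [hsuper A B])

lemma exists_isGreatest_isTight [Finite α] (hsuper : ∀ A B, f A + f B ≤ f (A ∪ B) + f (A ∩ B))
    (hle : ∀ S, f S ≤ ∑ i ∈ S, R i) (hnorm : f ∅ = 0) :
    ∃ T, IsGreatest {S | IsTight f R S} T :=
  (supClosed_isTight hsuper hle).exists_isGreatest ⟨∅, by simp [IsTight, hnorm]⟩

end Tight

theorem exists_index_all_constraints_strict
    (n : ℕ) (f : Finset (Fin n) → ℝ) (R : Fin n → ℝ)
    (hsuper : ∀ A B : Finset (Fin n), f A + f B ≤ f (A ∪ B) + f (A ∩ B))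
    (hnorm : f ∅ = 0)
    (hfeas : ∀ S : Finset (Fin n), S ⊂ Finset.univ → f S ≤ ∑ i ∈ S, R i)
    (hsum : f Finset.univ < ∑ i, R i) :
    ∃ j : Fin n, ∀ S : Finset (Fin n), j ∈ S → f S < ∑ i ∈ S, R i := by
  have hle : ∀ S, f S ≤ ∑ i ∈ S, R i := fun S =>
    (Finset.subset_univ S).eq_or_ssubset.elim (fun h => h ▸ hsum.le) (hfeas S)
  obtain ⟨T, hT, hmax⟩ := exists_isGreatest_isTight hsuper hle hnorm
  have hT_ne : T ≠ Finset.univ := by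
    rintro rfl
    exact hsum.ne hT
  obtain ⟨j, -, hj⟩ := Finset.exists_of_ssubset ((Finset.subset_univ T).ssubset_of_ne hT_ne)
  exact ⟨j, fun S hjS => (hle S).lt_of_ne fun hS => hj (hmax hS hjS)⟩
end

section
/- Let f : 2^{[n]} → ℝ be supermodular with f(∅)=0, and let R ∈ ℝ^n satisfy ∑_{i∈S} R_i ≥ f(S) for all S ⊆ [n] and ∑_{i=1}^n R_i > f([n]). Then there exists R' ∈ ℝ^n with R'_i ≤ R_i for all i, ∑_{i∈S} R'_i ≥ f(S) for all S ⊆ [n], and ∑_{i=1}^n R'_i = f([n]). -/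
/-- One tightening step: lower coordinate `i` as much as possible while keeping
feasibility; afterwards some set containing `i` is tight. -/
lemma sum_rate_step (n : ℕ) (f : Finset (Fin n) → ℝ) (R : Fin n → ℝ)
    (hfeas : ∀ S : Finset (Fin n), f S ≤ ∑ j ∈ S, R j) (i : Fin n) :
    ∃ R' : Fin n → ℝ, (∀ j, R' j ≤ R j) ∧
      (∀ S : Finset (Fin n), f S ≤ ∑ j ∈ S, R' j) ∧
      ∃ S : Finset (Fin n), i ∈ S ∧ f S = ∑ j ∈ S, R' j := by
  classical
  set T : Finset (Finset (Fin n)) := Finset.univ.filter (fun S => i ∈ S) with hT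
  have hTne : T.Nonempty := ⟨{i}, by simp [hT]⟩
  obtain ⟨S₀, hS₀T, hS₀⟩ := Finset.exists_mem_eq_inf' hTne (fun S => (∑ j ∈ S, R j) - f S)
  have hiS₀ : i ∈ S₀ := by simpa [hT] using hS₀T
  set δ : ℝ := (∑ j ∈ S₀, R j) - f S₀ with hδ
  have hδle : ∀ S : Finset (Fin n), i ∈ S → δ ≤ (∑ j ∈ S, R j) - f S := by
    intro S hS
    rw [show δ = T.inf' hTne fun S => ∑ j ∈ S, R j - f S from hS₀.symm]
    exact Finset.inf'_le _ (by simp [hT, hS])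
  have hδ0 : 0 ≤ δ := by
    have := hfeas S₀; rw [hδ]; linarith
  refine ⟨Function.update R i (R i - δ), ?_, ?_, S₀, hiS₀, ?_⟩
  · intro j
    rcases eq_or_ne j i with rfl | hj
    · simp [Function.update_self]; linarith
    · simp [Function.update_of_ne hj]
  · intro S
    by_cases hiS : i ∈ S
    case neg =>
      have : ∑ j ∈ S, Function.update R i (R i - δ) j = ∑ j ∈ S, R j := by
        apply Finset.sum_congr rfl
        intro j hj
        exact Function.update_of_ne (by rintro rfl; exact hiS hj) _ _
      rw [this]; exact hfeas S
    case pos =>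
      have hsum' : ∑ j ∈ S, Function.update R i (R i - δ) j = (∑ j ∈ S, R j) - δ := by
        rw [Finset.sum_update_of_mem hiS, ← Finset.sum_erase_add S R hiS,
          Finset.sdiff_singleton_eq_erase]
        ring
      rw [hsum']
      have := hδle S hiS
      linarith
  · have hsum' : ∑ j ∈ S₀, Function.update R i (R i - δ) j = (∑ j ∈ S₀, R j) - δ := by
      rw [Finset.sum_update_of_mem hiS₀, ← Finset.sum_erase_add S₀ R hiS₀,
        Finset.sdiff_singleton_eq_erase]
      ring
    rw [hsum', hδ]
    ring

theorem sum_rate_reduction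
    (n : ℕ) (f : Finset (Fin n) → ℝ) (R : Fin n → ℝ)
    (hsuper : ∀ A B : Finset (Fin n), f A + f B ≤ f (A ∪ B) + f (A ∩ B))
    (hnorm : f ∅ = 0)
    (hfeas : ∀ S : Finset (Fin n), f S ≤ ∑ i ∈ S, R i)
    (hsum : f Finset.univ < ∑ i, R i) :
    ∃ R' : Fin n → ℝ, (∀ i, R' i ≤ R i) ∧
      (∀ S : Finset (Fin n), f S ≤ ∑ i ∈ S, R' i) ∧
      (∑ i, R' i) = f Finset.univ := by
  classical
  -- Step 1: tighten every coordinate, maintaining the invariant that every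
  -- processed coordinate lies in some tight set.
  have main : ∀ T : Finset (Fin n), ∃ R' : Fin n → ℝ, (∀ j, R' j ≤ R j) ∧
      (∀ S : Finset (Fin n), f S ≤ ∑ j ∈ S, R' j) ∧
      ∀ i ∈ T, ∃ S : Finset (Fin n), i ∈ S ∧ f S = ∑ j ∈ S, R' j := by
    intro T
    induction T using Finset.induction with
    | empty => exact ⟨R, fun j => le_refl _, hfeas, by simp⟩
    | @insert a T' hx ih =>
      obtain ⟨R₁, hle₁, hfeas₁, htight₁⟩ := ih
      obtain ⟨R₂, hle₂, hfeas₂, S₂, haS₂, htS₂⟩ := sum_rate_step n f R₁ hfeas₁ a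
      refine ⟨R₂, fun j => (hle₂ j).trans (hle₁ j), hfeas₂, ?_⟩
      intro i hi
      rcases Finset.mem_insert.mp hi with rfl | hi'
      · exact ⟨S₂, haS₂, htS₂⟩
      · obtain ⟨S, hiS, htS⟩ := htight₁ i hi'
        refine ⟨S, hiS, le_antisymm (hfeas₂ S) ?_⟩
        calc ∑ j ∈ S, R₂ j ≤ ∑ j ∈ S, R₁ j := Finset.sum_le_sum (fun j _ => hle₂ j)
          _ = f S := htS.symm
  obtain ⟨R', hle, hfeas', htight⟩ := main Finset.univ
  -- Step 2: tight sets are closed under union (supermodularity), so univ is tight.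
  have union_tight : ∀ A B : Finset (Fin n),
      f A = ∑ j ∈ A, R' j → f B = ∑ j ∈ B, R' j →
      f (A ∪ B) = ∑ j ∈ A ∪ B, R' j := by
    intro A B hA hB
    have h1 := hsuper A B
    have h2 := hfeas' (A ∪ B)
    have h3 := hfeas' (A ∩ B)
    have h4 : (∑ j ∈ A ∪ B, R' j) + ∑ j ∈ A ∩ B, R' j
        = (∑ j ∈ A, R' j) + ∑ j ∈ B, R' j := Finset.sum_union_inter
    linarith
  have cover : ∀ U : Finset (Fin n), ∃ S : Finset (Fin n),
      U ⊆ S ∧ f S = ∑ j ∈ S, R' j := by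
    intro U
    induction U using Finset.induction with
    | empty => exact ⟨∅, Finset.Subset.refl _, by simp [hnorm]⟩
    | @insert a U' hx ih =>
      obtain ⟨S, hSsub, hStight⟩ := ih
      obtain ⟨Sa, haSa, hSa⟩ := htight a (Finset.mem_univ a)
      refine ⟨Sa ∪ S, ?_, union_tight Sa S hSa hStight⟩
      intro j hj
      rcases Finset.mem_insert.mp hj with rfl | hj'
      · exact Finset.mem_union_left _ haSa
      · exact Finset.mem_union_right _ (hSsub hj')
  obtain ⟨S, hSsub, hStight⟩ := cover Finset.univ
  have hSuniv : S = Finset.univ := Finset.univ_subset_iff.mp hSsub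
  exact ⟨R', hle, hfeas', by rw [← hSuniv] at *; exact hStight.symm⟩
end

section
/- Let f : 2^{[n]} → ℝ be normalized, monotone, and supermodular, and let λ ∈ ℝ^n with λ_i ≥ 0 for all i. Let π be a permutation of [n] with λ_{π(1)} ≥ λ_{π(2)} ≥ … ≥ λ_{π(n)}. Define R_{π(1)} = f({π(1)}), and R_{π(i)} = f({π(1),…,π(i)}) − f({π(1),…,π(i−1)}) for 2 ≤ i ≤ n. Then R minimizes λᵀR over the contra-polymatroid {R : ∑_{i∈B} R_i ≥ f(B) for all nonempty B ⊆ [n]}. -/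
open Finset

private lemma abel_aux (a b : ℕ → ℝ) (n : ℕ) :
    ∑ k ∈ range n, a k * b k
      = a n * ∑ k ∈ range n, b k
        + ∑ m ∈ range n, (a m - a (m+1)) * ∑ k ∈ range (m+1), b k := by
  induction n with
  | zero => simp
  | succ n ih =>
    rw [sum_range_succ, ih,
      sum_range_succ (fun m => (a m - a (m+1)) * ∑ k ∈ range (m+1), b k),
      sum_range_succ b]
    ring

theorem greedy_optimal_contrapolymatroid
    (n : ℕ) (f : Finset (Fin n) → ℝ) (lam R : Fin n → ℝ)
    (π : Equiv.Perm (Fin n))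
    (hnorm : f ∅ = 0)
    (hmono : ∀ A B : Finset (Fin n), A ⊆ B → f A ≤ f B)
    (hsuper : ∀ A B : Finset (Fin n), f A + f B ≤ f (A ∪ B) + f (A ∩ B))
    (hlam : ∀ i, 0 ≤ lam i)
    (hsorted : ∀ i j : Fin n, i ≤ j → lam (π j) ≤ lam (π i))
    (hR : ∀ i : Fin n,
      R (π i) = f ((Finset.univ.filter (fun k => k ≤ i)).image π)
        - f ((Finset.univ.filter (fun k => k < i)).image π)) :
    (∀ B : Finset (Fin n), B.Nonempty → f B ≤ ∑ i ∈ B, R i) ∧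
    (∀ R' : Fin n → ℝ,
      (∀ B : Finset (Fin n), B.Nonempty → f B ≤ ∑ i ∈ B, R' i) →
      ∑ i, lam i * R i ≤ ∑ i, lam i * R' i) := by
  classical
  -- prefix sets
  set S : ℕ → Finset (Fin n) :=
    fun m => (univ.filter (fun j : Fin n => (j : ℕ) < m)).image π with hSdef
  have hS0 : S 0 = ∅ := by simp [hSdef]
  have hSn : S n = univ := by
    have h1 : (univ.filter (fun j : Fin n => (j : ℕ) < n)) = univ := by
      apply filter_true_of_mem; intro j _; exact j.isLt
    ext x
    simp only [hSdef, h1, mem_image, mem_univ, iff_true]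
    exact ⟨π.symm x, by simp, π.apply_symm_apply x⟩
  have hSsucc : ∀ (k : ℕ) (h : k < n), S (k+1) = insert (π ⟨k, h⟩) (S k) := by
    intro k h
    have h1 : (univ.filter (fun j : Fin n => (j : ℕ) < k + 1))
        = insert (⟨k, h⟩ : Fin n) (univ.filter (fun j : Fin n => (j : ℕ) < k)) := by
      ext j
      simp only [mem_filter, mem_univ, true_and, mem_insert, Fin.ext_iff]
      omega
    simp only [hSdef, h1, image_insert]
  have hnotmem : ∀ (k : ℕ) (h : k < n), π ⟨k, h⟩ ∉ S k := by
    intro k h hmem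
    rw [hSdef] at hmem
    obtain ⟨j, hj, hje⟩ := mem_image.mp hmem
    rw [mem_filter] at hj
    have hj2 := π.injective hje
    rw [hj2] at hj
    exact absurd hj.2 (lt_irrefl k)
  -- telescoping identity for R
  have hRk : ∀ (k : ℕ) (h : k < n), R (π ⟨k, h⟩) = f (S (k+1)) - f (S k) := by
    intro k h
    have := hR ⟨k, h⟩
    have e1 : (univ.filter (fun j : Fin n => j ≤ (⟨k, h⟩ : Fin n)))
        = (univ.filter (fun j : Fin n => (j : ℕ) < k + 1)) := by
      apply filter_congr; intro j _
      simp [Fin.le_def, Nat.lt_succ_iff]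
    have e2 : (univ.filter (fun j : Fin n => j < (⟨k, h⟩ : Fin n)))
        = (univ.filter (fun j : Fin n => (j : ℕ) < k)) := by
      apply filter_congr; intro j _
      simp [Fin.lt_def]
    rw [e1, e2] at this
    exact this
  -- sums over prefix sets as sums over ranges
  have hsum : ∀ (g : Fin n → ℝ) (m : ℕ), m ≤ n →
      ∑ j ∈ S m, g j
        = ∑ k ∈ range m, (if h : k < n then g (π ⟨k, h⟩) else 0) := by
    intro g m hm
    simp only [hSdef]
    rw [sum_image (fun a _ b _ hab => π.injective hab)]
    rw [sum_filter]
    have e1 : ∀ i : Fin n,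
        (if (i : ℕ) < m then g (π i) else 0)
          = (fun k : ℕ => if k < m then (if h : k < n then g (π ⟨k, h⟩) else 0) else 0) (i : ℕ) := by
      intro i
      simp only [i.isLt, dif_pos, Fin.eta]
    calc ∑ i : Fin n, (if (i : ℕ) < m then g (π i) else 0)
        = ∑ i : Fin n,
            (fun k : ℕ => if k < m then (if h : k < n then g (π ⟨k, h⟩) else 0) else 0) (i : ℕ) := by
          exact Finset.sum_congr rfl (fun i _ => e1 i)
      _ = ∑ k ∈ range n, (if k < m then (if h : k < n then g (π ⟨k, h⟩) else 0) else 0) :=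
          Fin.sum_univ_eq_sum_range
            (fun k : ℕ => if k < m then (if h : k < n then g (π ⟨k, h⟩) else 0) else 0) n
      _ = ∑ k ∈ range m, (if h : k < n then g (π ⟨k, h⟩) else 0) := by
          rw [← sum_filter]
          congr 1
          ext k
          simp only [mem_filter, mem_range]
          omega
  -- Feasibility
  have feas : ∀ B : Finset (Fin n), B.Nonempty → f B ≤ ∑ i ∈ B, R i := by
    intro B _
    set G : ℕ → ℝ := fun m => f (S m ∩ B) with hGdef
    have hG0 : G 0 = 0 := by simp [hGdef, hS0, hnorm]
    have hGn : G n = f B := by simp [hGdef, hSn]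
    have key : ∀ k ∈ range n,
        G (k+1) - G k ≤ (if h : k < n then (if π ⟨k, h⟩ ∈ B then R (π ⟨k, h⟩) else 0) else 0) := by
      intro k hk
      rw [mem_range] at hk
      rw [dif_pos hk]
      set i : Fin n := ⟨k, hk⟩ with hi
      by_cases hib : π i ∈ B
      · rw [if_pos hib]
        have hins : S (k+1) ∩ B = insert (π i) (S k ∩ B) := by
          rw [hSsucc k hk, insert_inter_of_mem hib]
        have hsup := hsuper (insert (π i) (S k ∩ B)) (S k)
        have hpi := hnotmem k hk
        have hu : insert (π i) (S k ∩ B) ∪ S k = insert (π i) (S k) := by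
          ext x
          simp only [mem_insert, mem_union, mem_inter]
          tauto
        have hi2 : insert (π i) (S k ∩ B) ∩ S k = S k ∩ B := by
          ext x
          simp only [mem_insert, mem_inter]
          constructor
          · rintro ⟨h1 | h1, h2⟩
            · exact absurd h2 (h1 ▸ hpi)
            · exact h1
          · rintro ⟨h1, h2⟩
            exact ⟨Or.inr ⟨h1, h2⟩, h1⟩
        rw [hu, hi2] at hsup
        rw [hRk k hk]
        simp only [hGdef, hins]
        rw [← hSsucc k hk] at hsup
        linarith
      · rw [if_neg hib]
        have : S (k+1) ∩ B = S k ∩ B := by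
          rw [hSsucc k hk, insert_inter_of_notMem hib]
        simp [hGdef, this]
    calc f B = G n - G 0 := by rw [hG0, hGn]; ring
      _ = ∑ k ∈ range n, (G (k+1) - G k) := (sum_range_sub G n).symm
      _ ≤ ∑ k ∈ range n,
            (if h : k < n then (if π ⟨k, h⟩ ∈ B then R (π ⟨k, h⟩) else 0) else 0) :=
          sum_le_sum key
      _ = ∑ j ∈ S n, (if j ∈ B then R j else 0) :=
          (hsum (fun j => if j ∈ B then R j else 0) n le_rfl).symm
      _ = ∑ i ∈ B, R i := by
          rw [hSn, sum_ite_mem, univ_inter]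
  refine ⟨feas, ?_⟩
  -- Optimality
  intro R' hfeas'
  set a : ℕ → ℝ := fun k => if h : k < n then lam (π ⟨k, h⟩) else 0 with hadef
  set b : ℕ → ℝ := fun k => if h : k < n then R (π ⟨k, h⟩) else 0 with hbdef
  set b' : ℕ → ℝ := fun k => if h : k < n then R' (π ⟨k, h⟩) else 0 with hb'def
  have han : a n = 0 := by simp [hadef]
  have ha_nonneg : ∀ k, 0 ≤ a k := by
    intro k
    simp only [hadef]
    split
    · exact hlam _
    · exact le_rfl
  have ha_mono : ∀ k, a (k+1) ≤ a k := by
    intro k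
    simp only [hadef]
    by_cases h : k + 1 < n
    · rw [dif_pos h, dif_pos (Nat.lt_of_succ_lt h)]
      exact hsorted ⟨k, _⟩ ⟨k+1, h⟩ (by simp [Fin.le_def])
    · rw [dif_neg h]
      exact ha_nonneg k
  -- partial sums of greedy R
  have hPb : ∀ m, m ≤ n → ∑ k ∈ range m, b k = f (S m) := by
    intro m hm
    have : ∀ k ∈ range m, b k = f (S (k+1)) - f (S k) := by
      intro k hk
      rw [mem_range] at hk
      simp only [hbdef]
      rw [dif_pos (lt_of_lt_of_le hk hm), hRk]
    rw [sum_congr rfl this, sum_range_sub (fun m => f (S m)) m, hS0, hnorm, sub_zero]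
  have hSne : ∀ m, m < n → (S (m+1)).Nonempty := by
    intro m hm
    rw [hSsucc m hm]
    exact insert_nonempty _ _
  have hPb' : ∀ m, m < n → f (S (m+1)) ≤ ∑ k ∈ range (m+1), b' k := by
    intro m hm
    have := hfeas' (S (m+1)) (hSne m hm)
    rwa [hsum R' (m+1) hm] at this
  -- rewrite objective sums
  have hobj : ∀ x : Fin n → ℝ,
      ∑ i, lam i * x i
        = ∑ k ∈ range n, a k * (if h : k < n then x (π ⟨k, h⟩) else 0) := by
    intro x
    rw [← Equiv.sum_comp π (fun i => lam i * x i)]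
    have : ∀ i : Fin n, lam (π i) * x (π i)
        = (fun k : ℕ => a k * (if h : k < n then x (π ⟨k, h⟩) else 0)) (i : ℕ) := by
      intro i
      simp only [hadef, i.isLt, dif_pos, Fin.eta]
    rw [Finset.sum_congr rfl (fun i _ => this i)]
    exact Fin.sum_univ_eq_sum_range
      (fun k : ℕ => a k * (if h : k < n then x (π ⟨k, h⟩) else 0)) n
  rw [hobj R, hobj R']
  have e1 : ∑ k ∈ range n, a k * b k
      = ∑ m ∈ range n, (a m - a (m+1)) * f (S (m+1)) := by
    rw [abel_aux, han, zero_mul, zero_add]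
    apply sum_congr rfl
    intro m hm
    rw [mem_range] at hm
    rw [hPb (m+1) hm]
  have e2 : ∑ m ∈ range n, (a m - a (m+1)) * f (S (m+1)) ≤ ∑ k ∈ range n, a k * b' k := by
    rw [abel_aux a b' n, han, zero_mul, zero_add]
    apply sum_le_sum
    intro m hm
    rw [mem_range] at hm
    exact mul_le_mul_of_nonneg_left (hPb' m hm) (by linarith [ha_mono m])
  calc ∑ k ∈ range n, a k * b k = _ := e1
    _ ≤ _ := e2
end

section
/- With the greedy allocation from a supermodular, monotone, normalized f and weights λ ≥ 0 sorted by permutation π, the optimal value equals ∑_{i=1}^{n} (λ_{π(i)} − λ_{π(i+1)}) f({π(1),…,π(i)}), where λ_{π(n+1)} := 0. In particular min{λᵀR : ∑_{i∈B} R_i ≥ f(B) ∀ B nonempty} = ∑_{i=1}^{n} (λ_{π(i)} − λ_{π(i+1)}) f({π(1),…,π(i)}). -/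
/-!
Order the ground set by `π` and let `Sₖ` be its first `k` elements. Abel summation gives
`λᵀR = ∑ₖ (λ_{π(k)} - λ_{π(k+1)}) R(Sₖ)` for every `R`, and the coefficients are nonnegative because
`λ` is sorted and nonnegative, so every feasible `R` has value at least the formula. The greedy
allocation `R_{π(k)} = f(Sₖ) - f(Sₖ₋₁)` telescopes to `R(Sₖ) = f(Sₖ)`, so it attains the formula; it
is feasible because, if `a` is the `π`-last element of `B`, supermodularity applied to `B` and the
elements preceding `a` gives `f(B) - f(B \ {a}) ≤ R_a`.
-/

open Finset

theorem Finset.sum_range_mul_sub_eq_sum_sub_mul {R : Type*} [CommRing R] (n : ℕ) (a b : ℕ → R)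
    (ha : a n = 0) (hb : b 0 = 0) :
    ∑ k ∈ range n, a k * (b (k + 1) - b k) = ∑ k ∈ range n, (a k - a (k + 1)) * b (k + 1) := by
  rw [← sub_eq_zero, ← sum_sub_distrib]
  calc ∑ k ∈ range n, (a k * (b (k + 1) - b k) - (a k - a (k + 1)) * b (k + 1))
      = ∑ k ∈ range n, (a (k + 1) * b (k + 1) - a k * b k) := sum_congr rfl fun k _ => by ring
    _ = 0 := by rw [sum_range_sub (fun k => a k * b k), ha, hb, zero_mul, mul_zero, sub_zero]

namespace Equiv.Perm

variable {n : ℕ} (π : Equiv.Perm (Fin n))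

def prefixSet (k : ℕ) : Finset (Fin n) := univ.filter fun i => (π.symm i : ℕ) < k

@[simp]
theorem mem_prefixSet {k : ℕ} {i : Fin n} : i ∈ π.prefixSet k ↔ (π.symm i : ℕ) < k := by
  simp [prefixSet]

@[simp]
theorem prefixSet_zero : π.prefixSet 0 = ∅ := by
  ext; simp

theorem prefixSet_nonempty {k : ℕ} (hk : k < n) : (π.prefixSet (k + 1)).Nonempty :=
  ⟨π ⟨k, hk⟩, by simp⟩

theorem prefixSet_succ {k : ℕ} (hk : k < n) :
    π.prefixSet (k + 1) = cons (π ⟨k, hk⟩) (π.prefixSet k) (by simp) := by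
  ext i
  rw [mem_cons, mem_prefixSet, mem_prefixSet, ← Equiv.symm_apply_eq, Fin.ext_iff]
  dsimp only
  omega

theorem prefixSet_succ_eq_image (i : Fin n) :
    π.prefixSet (i + 1) = (univ.filter fun k => k ≤ i).image π := by
  ext j
  simp only [mem_prefixSet, mem_image, mem_filter, mem_univ, true_and]
  refine ⟨fun h => ⟨π.symm j, Fin.le_def.2 (by omega), by simp⟩, ?_⟩
  rintro ⟨a, ha, rfl⟩
  simpa [Nat.lt_succ_iff] using ha

/-- `λ_{π(k+1)}` in the paper's 1-based notation, with the convention `λ_{π(n+1)} = 0`. -/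
def sortedWeight (lam : Fin n → ℝ) (k : ℕ) : ℝ :=
  if h : k < n then lam (π ⟨k, h⟩) else 0

@[simp]
theorem sortedWeight_val (lam : Fin n → ℝ) (i : Fin n) : π.sortedWeight lam i = lam (π i) := by
  simp [sortedWeight]

theorem sortedWeight_succ_le {lam : Fin n → ℝ} (hlam : ∀ i, 0 ≤ lam i)
    (hsorted : ∀ i j : Fin n, i ≤ j → lam (π j) ≤ lam (π i)) (k : ℕ) :
    π.sortedWeight lam (k + 1) ≤ π.sortedWeight lam k := by
  unfold sortedWeight
  split_ifs
  · exact hsorted _ _ (Fin.le_def.2 (Nat.le_succ k))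
  · omega
  · exact hlam _
  · rfl

theorem sum_mul_eq_sum_sortedWeight_sub_mul (lam R : Fin n → ℝ) :
    ∑ i, lam i * R i = ∑ k ∈ range n,
      (π.sortedWeight lam k - π.sortedWeight lam (k + 1)) * ∑ i ∈ π.prefixSet (k + 1), R i := by
  calc ∑ i, lam i * R i = ∑ i : Fin n, lam (π i) * R (π i) := (Equiv.sum_comp π _).symm
    _ = ∑ k ∈ range n, π.sortedWeight lam k *
          (∑ i ∈ π.prefixSet (k + 1), R i - ∑ i ∈ π.prefixSet k, R i) := by
      rw [← Fin.sum_univ_eq_sum_range]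
      refine sum_congr rfl fun i _ => ?_
      rw [sortedWeight_val, π.prefixSet_succ i.isLt, sum_cons, add_sub_cancel_right]
    _ = _ := sum_range_mul_sub_eq_sum_sub_mul _ (π.sortedWeight lam)
          (fun k => ∑ i ∈ π.prefixSet k, R i) (by simp [sortedWeight]) (by simp)

def greedyAlloc (f : Finset (Fin n) → ℝ) (i : Fin n) : ℝ :=
  f (π.prefixSet (π.symm i + 1)) - f (π.prefixSet (π.symm i))

variable {f : Finset (Fin n) → ℝ}

theorem sum_greedyAlloc_prefixSet (hnorm : f ∅ = 0) {k : ℕ} (hk : k ≤ n) :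
    ∑ i ∈ π.prefixSet k, π.greedyAlloc f i = f (π.prefixSet k) := by
  induction k with
  | zero => simp [hnorm]
  | succ k ih =>
    conv_lhs => rw [π.prefixSet_succ hk, sum_cons, ih (by omega)]
    simp [greedyAlloc]

theorem le_sum_greedyAlloc (hnorm : f ∅ = 0)
    (hsuper : ∀ A B : Finset (Fin n), f A + f B ≤ f (A ∪ B) + f (A ∩ B)) (B : Finset (Fin n)) :
    f B ≤ ∑ i ∈ B, π.greedyAlloc f i := by
  induction B using induction_on_max_value (fun i => π.symm i) with
  | empty => simp [hnorm]
  | insert a s ha hmax ih =>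
    have hinter : insert a s ∩ π.prefixSet (π.symm a) = s := by
      ext i
      simp only [mem_inter, mem_insert, mem_prefixSet]
      refine ⟨fun ⟨hi, hlt⟩ => hi.resolve_left (by rintro rfl; exact lt_irrefl _ hlt),
        fun hi => ⟨Or.inr hi, ?_⟩⟩
      exact Fin.lt_def.1 ((hmax i hi).lt_of_ne (π.symm.injective.ne (ne_of_mem_of_not_mem hi ha)))
    have hunion : insert a s ∪ π.prefixSet (π.symm a) = π.prefixSet (π.symm a + 1) := by
      ext i
      simp only [mem_union, mem_insert, mem_prefixSet]
      constructor
      · rintro ((rfl | hi) | hlt)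
        · exact Nat.lt_succ_self _
        · exact Nat.lt_succ_of_le (hmax i hi)
        · exact Nat.lt_succ_of_lt hlt
      · intro h
        rcases Nat.lt_succ_iff_lt_or_eq.1 h with hlt | heq
        · exact Or.inr hlt
        · exact Or.inl (Or.inl (π.symm.injective (Fin.ext heq)))
    have := hsuper (insert a s) (π.prefixSet (π.symm a))
    rw [hinter, hunion] at this
    rw [sum_insert ha, greedyAlloc]
    linarith

end Equiv.Perm

theorem greedy_value_formula_general
    (n : ℕ) (f : Finset (Fin n) → ℝ) (lam : Fin n → ℝ)
    (π : Equiv.Perm (Fin n))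
    (hnorm : f ∅ = 0)
    (hsuper : ∀ A B : Finset (Fin n), f A + f B ≤ f (A ∪ B) + f (A ∩ B))
    (hlam : ∀ i, 0 ≤ lam i)
    (hsorted : ∀ i j : Fin n, i ≤ j → lam (π j) ≤ lam (π i)) :
    IsLeast
      {x : ℝ | ∃ R : Fin n → ℝ,
        (∀ B : Finset (Fin n), B.Nonempty → f B ≤ ∑ i ∈ B, R i) ∧
        x = ∑ i, lam i * R i}
      (∑ i : Fin n,
        (lam (π i) - if h : (i : ℕ) + 1 < n then lam (π ⟨(i : ℕ) + 1, h⟩) else 0) *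
          f ((Finset.univ.filter (fun k => k ≤ i)).image π)) := by
  have hvalue : (∑ i : Fin n,
      (lam (π i) - if h : (i : ℕ) + 1 < n then lam (π ⟨(i : ℕ) + 1, h⟩) else 0) *
        f ((Finset.univ.filter (fun k => k ≤ i)).image π)) = ∑ k ∈ range n,
      (π.sortedWeight lam k - π.sortedWeight lam (k + 1)) * f (π.prefixSet (k + 1)) := by
    rw [← Fin.sum_univ_eq_sum_range]
    exact sum_congr rfl fun i _ => by rw [π.sortedWeight_val, π.prefixSet_succ_eq_image]; rfl
  rw [hvalue]
  refine ⟨⟨π.greedyAlloc f, fun B _ => π.le_sum_greedyAlloc hnorm hsuper B, ?_⟩, ?_⟩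
  · rw [π.sum_mul_eq_sum_sortedWeight_sub_mul]
    exact sum_congr rfl fun k hk => by
      rw [π.sum_greedyAlloc_prefixSet hnorm (mem_range.1 hk)]
  · rintro x ⟨R, hR, rfl⟩
    rw [π.sum_mul_eq_sum_sortedWeight_sub_mul]
    refine sum_le_sum fun k hk => mul_le_mul_of_nonneg_left ?_ ?_
    · exact hR _ (π.prefixSet_nonempty (mem_range.1 hk))
    · exact sub_nonneg.2 (π.sortedWeight_succ_le hlam hsorted k)

theorem greedy_value_formula
    (n : ℕ) (f : Finset (Fin n) → ℝ) (lam : Fin n → ℝ)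
    (π : Equiv.Perm (Fin n))
    (hnorm : f ∅ = 0)
    (hmono : ∀ A B : Finset (Fin n), A ⊆ B → f A ≤ f B)
    (hsuper : ∀ A B : Finset (Fin n), f A + f B ≤ f (A ∪ B) + f (A ∩ B))
    (hlam : ∀ i, 0 ≤ lam i)
    (hsorted : ∀ i j : Fin n, i ≤ j → lam (π j) ≤ lam (π i)) :
    IsLeast
      {x : ℝ | ∃ R : Fin n → ℝ,
        (∀ B : Finset (Fin n), B.Nonempty → f B ≤ ∑ i ∈ B, R i) ∧
        x = ∑ i, lam i * R i}
      (∑ i : Fin n,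
        (lam (π i) - if h : (i : ℕ) + 1 < n then lam (π ⟨(i : ℕ) + 1, h⟩) else 0) *
          f ((Finset.univ.filter (fun k => k ≤ i)).image π)) :=
  greedy_value_formula_general n f lam π hnorm hsuper hlam hsorted
end

section
/- Let f : 2^{[n]} → ℝ be supermodular with f(∅)=0 and suppose the constraints ∑_{i∈B} R_i ≥ f(B) (for all nonempty B) are feasible. Then the greedy vector R defined by R_{π(i)} = f({π(1),…,π(i)}) − f({π(1),…,π(i−1)}) for any permutation π satisfies ∑_{i∈B} R_{i} ≥ f(B) for every B ⊆ [n], with equality for each prefix set {π(1),…,π(k)}. -/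
/-!
After relabelling by `π`, the greedy vector is `R a = f (Iic a) - f (Iio a)`. Peel off the largest
element `a` of `B`: supermodularity applied to `B` and `Iio a` gives
`f B + f (Iio a) ≤ f (Iic a) + f (B.erase a)`, i.e. `f B ≤ R a + f (B.erase a)`, and induction
finishes. On a prefix the sum of `R` telescopes to `f`.
-/

open Finset

def Supermodular {α β : Type*} [DecidableEq α] [Add β] [LE β] (f : Finset α → β) : Prop :=
  ∀ A B : Finset α, f A + f B ≤ f (A ∪ B) + f (A ∩ B)

theorem Supermodular.comp_image {α γ β : Type*} [DecidableEq α] [DecidableEq γ] [Add β] [LE β]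
    {f : Finset γ → β} (hf : Supermodular f) {e : α → γ} (he : Function.Injective e) :
    Supermodular fun s => f (s.image e) := by
  intro A B
  simpa only [image_union, image_inter _ _ he] using hf (A.image e) (B.image e)

section Greedy

variable {α β : Type*} [LinearOrder α] [LocallyFiniteOrderBot α] [AddCommGroup β]

def greedyVector (f : Finset α → β) (i : α) : β :=
  f (Iic i) - f (Iio i)

theorem sum_greedyVector_of_isLowerSet {f : Finset α → β} (hf₀ : f ∅ = 0) {s : Finset α}
    (hs : IsLowerSet (s : Set α)) : ∑ i ∈ s, greedyVector f i = f s := by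
  induction s using Finset.induction_on_max with
  | empty => simp [hf₀]
  | insert a t hlt ih =>
    have hIio : Iio a = t := by
      ext x
      refine ⟨fun hx => ?_, fun hx => mem_Iio.2 (hlt x hx)⟩
      have hxa : x < a := mem_Iio.1 hx
      have : x ∈ insert a t := hs hxa.le (by simp)
      exact (mem_insert.1 this).resolve_left hxa.ne
    have ht : IsLowerSet (t : Set α) := by
      rw [← hIio, coe_Iio]
      exact isLowerSet_Iio a
    have hat : a ∉ t := fun ha => (hlt a ha).false
    rw [sum_insert hat, ih ht, greedyVector, ← Iio_insert, hIio]
    abel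

theorem le_sum_greedyVector [PartialOrder β] [IsOrderedAddMonoid β] {f : Finset α → β} (hf : Supermodular f) (hf₀ : f ∅ = 0)
    (s : Finset α) : f s ≤ ∑ i ∈ s, greedyVector f i := by
  induction s using Finset.induction_on_max with
  | empty => simp [hf₀]
  | insert a t hlt ih =>
    have ht : t ⊆ Iio a := fun x hx => mem_Iio.2 (hlt x hx)
    have hunion : insert a t ∪ Iio a = Iic a := by
      rw [insert_union, union_eq_right.2 ht, Iio_insert]
    have hinter : insert a t ∩ Iio a = t := by
      rw [insert_inter_of_notMem (by simp), inter_eq_left.2 ht]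
    have hat : a ∉ t := fun ha => (hlt a ha).false
    have key := hf (insert a t) (Iio a)
    rw [hunion, hinter] at key
    rw [sum_insert hat, greedyVector]
    calc f (insert a t) ≤ f (Iic a) - f (Iio a) + f t := by
          rw [sub_add_eq_add_sub, le_sub_iff_add_le]; exact key
      _ ≤ f (Iic a) - f (Iio a) + ∑ i ∈ t, greedyVector f i := by gcongr

end Greedy

theorem greedy_vector_feasible_general
    (n : ℕ) (f : Finset (Fin n) → ℝ) (R : Fin n → ℝ)
    (π : Equiv.Perm (Fin n))
    (hsuper : ∀ A B : Finset (Fin n), f A + f B ≤ f (A ∪ B) + f (A ∩ B))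
    (hnorm : f ∅ = 0)
    (hR : ∀ i : Fin n,
      R (π i) = f ((Finset.univ.filter (fun k => k ≤ i)).image π)
        - f ((Finset.univ.filter (fun k => k < i)).image π)) :
    (∀ B : Finset (Fin n), f B ≤ ∑ i ∈ B, R i) ∧
    (∀ k : Fin n,
      ∑ i ∈ (Finset.univ.filter (fun j => j ≤ k)).image π, R i =
        f ((Finset.univ.filter (fun j => j ≤ k)).image π)) := by
  set g : Finset (Fin n) → ℝ := fun s => f (s.image π)
  have hg : Supermodular g := Supermodular.comp_image hsuper π.injective
  have hg₀ : g ∅ = 0 := by simp [g, hnorm]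
  have hsum : ∀ s, ∑ i ∈ s.image π, R i = ∑ i ∈ s, greedyVector g i := by
    intro s
    rw [sum_image fun _ _ _ _ h => π.injective h]
    refine sum_congr rfl fun i _ => ?_
    rw [hR i, filter_ge_eq_Iic, filter_gt_eq_Iio]
    rfl
  refine ⟨fun B => ?_, fun k => ?_⟩
  · have hB : (B.image π.symm).image π = B := by simp [image_image]
    rw [← hB, hsum]
    exact le_sum_greedyVector hg hg₀ _
  · rw [filter_ge_eq_Iic, hsum]
    exact sum_greedyVector_of_isLowerSet hg₀ (by simpa using isLowerSet_Iic k)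

theorem greedy_vector_feasible
    (n : ℕ) (f : Finset (Fin n) → ℝ) (R : Fin n → ℝ)
    (π : Equiv.Perm (Fin n))
    (hsuper : ∀ A B : Finset (Fin n), f A + f B ≤ f (A ∪ B) + f (A ∩ B))
    (hnorm : f ∅ = 0)
    (hfeas : ∃ R₀ : Fin n → ℝ,
      ∀ B : Finset (Fin n), B.Nonempty → f B ≤ ∑ i ∈ B, R₀ i)
    (hR : ∀ i : Fin n,
      R (π i) = f ((Finset.univ.filter (fun k => k ≤ i)).image π)
        - f ((Finset.univ.filter (fun k => k < i)).image π)) :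
    (∀ B : Finset (Fin n), f B ≤ ∑ i ∈ B, R i) ∧
    (∀ k : Fin n,
      ∑ i ∈ (Finset.univ.filter (fun j => j ≤ k)).image π, R i =
        f ((Finset.univ.filter (fun j => j ≤ k)).image π)) :=
  greedy_vector_feasible_general n f R π hsuper hnorm hR
end

section
/- Let f : 2^{[n]} → ℝ be normalized and supermodular, and let R be a point of the contra-polymatroid with ∑_{i=1}^n R_i = f([n]). For any λ ∈ ℝ^n_{≥0} sorted decreasingly by permutation π, λᵀR ≥ ∑_{i=1}^{n}(λ_{π(i)} − λ_{π(i+1)}) f({π(1),…,π(i)}) with λ_{π(n+1)} := 0, and equality holds for the greedy vector along π. -/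
open Finset

lemma fin_filter_sum_eq (n : ℕ) (p : ℕ → Prop) [DecidablePred p] (g : Fin n → ℝ) :
    ∑ j ∈ univ.filter (fun j : Fin n => p j.val), g j
      = ∑ k ∈ (range n).filter p, (if h : k < n then g ⟨k, h⟩ else 0) := by
  rw [sum_filter, sum_filter,
    ← Fin.sum_univ_eq_sum_range (fun k => if p k then (if h : k < n then g ⟨k, h⟩ else 0) else 0) n]
  exact sum_congr rfl fun j _ => by simp [j.isLt]

lemma swap_abel (n : ℕ) (u v : Fin n → ℝ) :
    ∑ i, (∑ j ∈ univ.filter (fun j : Fin n => i ≤ j), v j) * u i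
      = ∑ j, v j * (∑ i ∈ univ.filter (fun i : Fin n => i ≤ j), u i) := by
  have h1 : ∀ i : Fin n, (∑ j ∈ univ.filter (fun j : Fin n => i ≤ j), v j) * u i
      = ∑ j : Fin n, if i ≤ j then v j * u i else 0 := by
    intro i; rw [Finset.sum_mul, sum_filter]
  have h2 : ∀ j : Fin n, v j * (∑ i ∈ univ.filter (fun i : Fin n => i ≤ j), u i)
      = ∑ i : Fin n, if i ≤ j then v j * u i else 0 := by
    intro j; rw [Finset.mul_sum, sum_filter]
  simp_rw [h1, h2]
  exact Finset.sum_comm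

theorem abel_summation_greedy_bound
    (n : ℕ) (f : Finset (Fin n) → ℝ) (lam R G : Fin n → ℝ)
    (π : Equiv.Perm (Fin n))
    (hnorm : f ∅ = 0)
    (hsuper : ∀ A B : Finset (Fin n), f A + f B ≤ f (A ∪ B) + f (A ∩ B))
    (hfeas : ∀ B : Finset (Fin n), B.Nonempty → f B ≤ ∑ i ∈ B, R i)
    (hsum : ∑ i, R i = f Finset.univ)
    (hlam : ∀ i, 0 ≤ lam i)
    (hsorted : ∀ i j : Fin n, i ≤ j → lam (π j) ≤ lam (π i))
    (hG : ∀ i : Fin n,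
      G (π i) = f ((Finset.univ.filter (fun k => k ≤ i)).image π)
        - f ((Finset.univ.filter (fun k => k < i)).image π)) :
    (∑ i : Fin n,
        (lam (π i) - if h : (i : ℕ) + 1 < n then lam (π ⟨(i : ℕ) + 1, h⟩) else 0) *
          f ((Finset.univ.filter (fun k => k ≤ i)).image π))
      ≤ ∑ i, lam i * R i ∧
    (∑ i, lam i * G i) =
      ∑ i : Fin n,
        (lam (π i) - if h : (i : ℕ) + 1 < n then lam (π ⟨(i : ℕ) + 1, h⟩) else 0) *
          f ((Finset.univ.filter (fun k => k ≤ i)).image π) := by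
  set L : ℕ → ℝ := fun k => if h : k < n then lam (π ⟨k, h⟩) else 0 with hL
  set c : Fin n → ℝ := fun j => L j.val - L (j.val + 1) with hcdef
  have hLpos : ∀ i : Fin n, L i.val = lam (π i) := fun i => dif_pos i.isLt
  have hLn : L n = 0 := dif_neg (lt_irrefl n)
  -- coefficient equals c
  have hc : ∀ i : Fin n,
      (lam (π i) - if h : (i : ℕ) + 1 < n then lam (π ⟨(i : ℕ) + 1, h⟩) else 0) = c i := by
    intro i
    have h2 : L (i.val + 1) = if h : (i : ℕ) + 1 < n then lam (π ⟨(i : ℕ) + 1, h⟩) else 0 := rfl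
    rw [show c i = L i.val - L (i.val + 1) from rfl, hLpos i, h2]
  -- telescope 1
  have tele1 : ∀ a : Fin n, ∑ j ∈ univ.filter (fun j : Fin n => a ≤ j), c j = lam (π a) := by
    intro a
    calc ∑ j ∈ univ.filter (fun j : Fin n => a ≤ j), c j
        = ∑ j ∈ univ.filter (fun j : Fin n => a.val ≤ j.val), c j := rfl
      _ = ∑ k ∈ (range n).filter (fun k => a.val ≤ k), (if h : k < n then c ⟨k, h⟩ else 0) :=
          fin_filter_sum_eq n (fun k => a.val ≤ k) c
      _ = ∑ k ∈ Ico a.val n, (if h : k < n then c ⟨k, h⟩ else 0) := by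
          congr 1; ext k; simp only [mem_filter, mem_range, mem_Ico]; omega
      _ = ∑ k ∈ Ico a.val n, (L k - L (k + 1)) := by
          refine sum_congr rfl fun k hk => ?_
          have hk' : k < n := (mem_Ico.mp hk).2
          rw [dif_pos hk']
      _ = ∑ k ∈ range (n - a.val), (L (a.val + k) - L (a.val + (k + 1))) := by
          rw [Finset.sum_Ico_eq_sum_range]
          exact sum_congr rfl fun k _ => by rw [Nat.add_assoc]
      _ = L (a.val + 0) - L (a.val + (n - a.val)) :=
          Finset.sum_range_sub' (fun m => L (a.val + m)) (n - a.val)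
      _ = lam (π a) := by
          rw [Nat.add_zero, Nat.add_sub_cancel' a.isLt.le, hLn, sub_zero, hLpos a]
  -- prefix values
  set FS : ℕ → ℝ := fun m => f ((univ.filter (fun k : Fin n => (k : ℕ) < m)).image π) with hFS
  have hFS0 : FS 0 = 0 := by
    have hemp : (univ.filter (fun k : Fin n => (k : ℕ) < 0)) = (∅ : Finset (Fin n)) := by
      ext k; simp only [mem_filter, mem_univ, true_and, notMem_empty, iff_false]; omega
    show f ((univ.filter (fun k : Fin n => (k : ℕ) < 0)).image π) = 0
    rw [hemp, image_empty, hnorm]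
  have hSeq : ∀ a : Fin n,
      f ((univ.filter (fun k : Fin n => k ≤ a)).image π) = FS (a.val + 1) := by
    intro a
    have hflt : (univ.filter (fun k : Fin n => k ≤ a))
        = univ.filter (fun k : Fin n => (k : ℕ) < a.val + 1) := by
      ext k; simp only [mem_filter, mem_univ, true_and]; omega
    rw [hflt]
  have hG' : ∀ i : Fin n, G (π i) = FS (i.val + 1) - FS i.val := by
    intro i
    have hlt : f ((univ.filter (fun k : Fin n => k < i)).image π) = FS i.val := rfl
    rw [hG i, hSeq i, hlt]
  -- telescope 2
  have tele2 : ∀ a : Fin n, ∑ i ∈ univ.filter (fun i : Fin n => i ≤ a), G (π i)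
      = f ((univ.filter (fun k : Fin n => k ≤ a)).image π) := by
    intro a
    calc ∑ i ∈ univ.filter (fun i : Fin n => i ≤ a), G (π i)
        = ∑ i ∈ univ.filter (fun i : Fin n => i.val ≤ a.val), G (π i) := rfl
      _ = ∑ k ∈ (range n).filter (fun k => k ≤ a.val), (if h : k < n then G (π ⟨k, h⟩) else 0) :=
          fin_filter_sum_eq n (fun k => k ≤ a.val) (fun i => G (π i))
      _ = ∑ k ∈ range (a.val + 1), (if h : k < n then G (π ⟨k, h⟩) else 0) := by
          congr 1; ext k; simp only [mem_filter, mem_range]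
          have := a.isLt; omega
      _ = ∑ k ∈ range (a.val + 1), (FS (k + 1) - FS k) := by
          refine sum_congr rfl fun k hk => ?_
          have hk' : k < n := by have := mem_range.mp hk; have := a.isLt; omega
          rw [dif_pos hk', hG' ⟨k, hk'⟩]
      _ = FS (a.val + 1) - FS 0 := Finset.sum_range_sub FS (a.val + 1)
      _ = f ((univ.filter (fun k : Fin n => k ≤ a)).image π) := by
          rw [hFS0, sub_zero, hSeq a]
  -- uniform rewriting
  have key : ∀ v : Fin n → ℝ, ∑ i, lam i * v i
      = ∑ j, c j * (∑ i ∈ univ.filter (fun i : Fin n => i ≤ j), v (π i)) := by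
    intro v
    rw [← Equiv.sum_comp π (fun i => lam i * v i)]
    have hstep : ∀ i : Fin n, lam (π i) * v (π i)
        = (∑ j ∈ univ.filter (fun j : Fin n => i ≤ j), c j) * v (π i) := by
      intro i; rw [tele1 i]
    simp_rw [hstep]
    exact swap_abel n (fun i => v (π i)) c
  have hcnonneg : ∀ j : Fin n, 0 ≤ c j := by
    intro j
    rw [← hc j]
    by_cases h : (j : ℕ) + 1 < n
    · rw [dif_pos h]
      have hle : j ≤ (⟨(j : ℕ) + 1, h⟩ : Fin n) := Fin.le_def.mpr (Nat.le_succ _)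
      linarith [hsorted j ⟨(j : ℕ) + 1, h⟩ hle]
    · rw [dif_neg h, sub_zero]; exact hlam (π j)
  constructor
  · rw [key R]
    simp_rw [hc]
    refine sum_le_sum fun j _ => ?_
    have himg : ∑ i ∈ univ.filter (fun i : Fin n => i ≤ j), R (π i)
        = ∑ x ∈ (univ.filter (fun k : Fin n => k ≤ j)).image π, R x :=
      (Finset.sum_image (fun a _ b _ h => π.injective h)).symm
    rw [himg]
    refine mul_le_mul_of_nonneg_left ?_ (hcnonneg j)
    exact hfeas _ ⟨π j, mem_image_of_mem π (mem_filter.mpr ⟨mem_univ _, le_refl _⟩)⟩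
  · rw [key G]
    simp_rw [hc, tele2]
end

section
/- Let σ_X² > 0, σ_i² > 0 for i ∈ [n], D > 0, and fix r ∈ ℝ^n_{≥0}. Define f_r(A) = ∑_{k∈A} r_k + (1/2)·log( (1/σ_X² + ∑_{k=1}^n (1−e^{−2r_k})/σ_k²) / (1/σ_X² + ∑_{k∈A^c} (1−e^{−2r_k})/σ_k²) ) for nonempty A ⊆ [n], and f_r(∅)=0. Then f_r is supermodular: f_r(A) + f_r(B) ≤ f_r(A∪B) + f_r(A∩B) for all A, B ⊆ [n]. -/
open Finset Real

/-! Writing `a k = (1 - e^{-2 r_k}) / σ_k² ≥ 0` and `c = 1 / σ_X²`, the rank is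
`f A = ∑_{k ∈ A} r_k + ½ log T - ½ log (c + ∑_{k ∈ Aᶜ} a k)` (also for `A = ∅`, where both
logarithms agree). The first summand is modular, so supermodularity of `f` amounts to
submodularity of `S ↦ log (c + ∑_{k ∈ S} a k)`, which after exponentiating is the inequality
`(c + u) (c + v) ≤ (c + p) (c + q)` for `u + v = p + q`, `v ≤ p`, `v ≤ q`. -/

theorem mul_le_mul_of_add_eq_add_of_le_of_le {R : Type*} [CommRing R] [PartialOrder R]
    [IsOrderedRing R] {u v p q : R} (hsum : u + v = p + q) (hp : v ≤ p) (hq : v ≤ q) :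
    u * v ≤ p * q := by
  have hu : u = p + q - v := eq_sub_of_add_eq hsum
  have key : p * q - u * v = (p - v) * (q - v) := by rw [hu]; ring
  exact sub_nonneg.1 (key ▸ mul_nonneg (sub_nonneg.2 hp) (sub_nonneg.2 hq))

theorem log_add_sum_union_add_log_add_sum_inter_le {ι : Type*} [DecidableEq ι] {c : ℝ}
    {a : ι → ℝ} (hc : 0 < c) (ha : ∀ k, 0 ≤ a k) (s t : Finset ι) :
    log (c + ∑ k ∈ s ∪ t, a k) + log (c + ∑ k ∈ s ∩ t, a k) ≤
      log (c + ∑ k ∈ s, a k) + log (c + ∑ k ∈ t, a k) := by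
  have hpos : ∀ u : Finset ι, 0 < c + ∑ k ∈ u, a k := fun u =>
    add_pos_of_pos_of_nonneg hc (sum_nonneg fun k _ => ha k)
  have hmono : ∀ {u w : Finset ι}, u ⊆ w → ∑ k ∈ u, a k ≤ ∑ k ∈ w, a k := fun h =>
    sum_le_sum_of_subset_of_nonneg h fun k _ _ => ha k
  rw [← log_mul (hpos _).ne' (hpos _).ne', ← log_mul (hpos _).ne' (hpos _).ne']
  refine log_le_log (mul_pos (hpos _) (hpos _)) (mul_le_mul_of_add_eq_add_of_le_of_le ?_
    (add_le_add_right (hmono inter_subset_left) c) (add_le_add_right (hmono inter_subset_right) c))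
  linarith [sum_union_inter (s₁ := s) (s₂ := t) (f := a)]

theorem ceo_rank_supermodular_general
    (n : ℕ) (σX : ℝ) (σ : Fin n → ℝ) (r : Fin n → ℝ)
    (f : Finset (Fin n) → ℝ)
    (hσX : 0 < σX)
    (hr : ∀ i, 0 ≤ r i)
    (hf0 : f ∅ = 0)
    (hf : ∀ A : Finset (Fin n), A.Nonempty →
      f A = (∑ k ∈ A, r k) +
        (1 / 2) * Real.log
          ((1 / σX ^ 2 + ∑ k : Fin n, (1 - Real.exp (-2 * r k)) / (σ k) ^ 2) /
           (1 / σX ^ 2 + ∑ k ∈ Aᶜ, (1 - Real.exp (-2 * r k)) / (σ k) ^ 2))) :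
    ∀ A B : Finset (Fin n), f A + f B ≤ f (A ∪ B) + f (A ∩ B) := by
  set a : Fin n → ℝ := fun k => (1 - exp (-2 * r k)) / σ k ^ 2
  set c : ℝ := 1 / σX ^ 2
  have hc : 0 < c := by positivity
  have ha : ∀ k, 0 ≤ a k := fun k =>
    div_nonneg (sub_nonneg.2 (exp_le_one_iff.2 (by linarith [hr k]))) (sq_nonneg _)
  have hpos : ∀ S : Finset (Fin n), 0 < c + ∑ k ∈ S, a k := fun S =>
    add_pos_of_pos_of_nonneg hc (sum_nonneg fun k _ => ha k)
  have hf_log : ∀ A, f A = ∑ k ∈ A, r k +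
      (1 / 2) * (log (c + ∑ k, a k) - log (c + ∑ k ∈ Aᶜ, a k)) := by
    intro A
    rcases A.eq_empty_or_nonempty with rfl | hA
    · simp [hf0]
    · rw [hf A hA, log_div (hpos univ).ne' (hpos _).ne']
  intro A B
  have hr_modular := sum_union_inter (s₁ := A) (s₂ := B) (f := r)
  have hlog := log_add_sum_union_add_log_add_sum_inter_le hc ha Aᶜ Bᶜ
  rw [← compl_inter, ← compl_union] at hlog
  rw [hf_log A, hf_log B, hf_log (A ∪ B), hf_log (A ∩ B)]
  linarith

theorem ceo_rank_supermodular
    (n : ℕ) (σX D : ℝ) (σ : Fin n → ℝ) (r : Fin n → ℝ)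
    (f : Finset (Fin n) → ℝ)
    (hσX : 0 < σX) (hσ : ∀ i, 0 < σ i) (hD : 0 < D)
    (hr : ∀ i, 0 ≤ r i)
    (hf0 : f ∅ = 0)
    (hf : ∀ A : Finset (Fin n), A.Nonempty →
      f A = (∑ k ∈ A, r k) +
        (1 / 2) * Real.log
          ((1 / σX ^ 2 + ∑ k : Fin n, (1 - Real.exp (-2 * r k)) / (σ k) ^ 2) /
           (1 / σX ^ 2 + ∑ k ∈ Aᶜ, (1 - Real.exp (-2 * r k)) / (σ k) ^ 2))) :
    ∀ A B : Finset (Fin n), f A + f B ≤ f (A ∪ B) + f (A ∩ B) :=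
  ceo_rank_supermodular_general n σX σ r f hσX hr hf0 hf
end

section
/- Let f : 2^{[n]} → ℝ be supermodular and normalized, and suppose R is a vertex (extreme point) of the contra-polymatroid P(f) = {R : ∑_{i∈B} R_i ≥ f(B) ∀ nonempty B} lying on the face ∑_{i=1}^n R_i = f([n]). Then there is a permutation π of [n] such that R is the greedy vector along π, i.e., R_{π(i)} = f({π(1),…,π(i)}) − f({π(1),…,π(i−1)}) for all i. -/
/-!
Call a set `B` tight for `R` if `∑_{i ∈ B} R i = f B`. Supermodularity makes the tight sets a
lattice of sets containing `∅` and `[n]`. If two elements `i ≠ j` were not separated by any tight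
set, moving a small amount of rate from `j` to `i` and back would keep `R` in the base in both
directions, contradicting extremality. So the tight sets separate points; the smallest tight set
containing `i` then determines `i`, and listing the elements by the size of these sets yields an
order all of whose prefixes are tight. Tightness of two consecutive prefixes is the greedy formula.
-/

open Finset

section SetLattice

variable {ι : Type*} [Fintype ι] [DecidableEq ι] {s : Set (Finset ι)}

open Classical in
/-- The smallest member of `s` containing `i` when `s` is closed under intersection; `univ` if no
member contains `i`. -/
noncomputable def leastMemContaining (s : Set (Finset ι)) (i : ι) : Finset ι :=
  ({T | T ∈ s ∧ i ∈ T} : Finset (Finset ι)).inf id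

lemma leastMemContaining_mem (hs : InfClosed s) (huniv : univ ∈ s) (i : ι) :
    leastMemContaining s i ∈ s := by
  classical
  exact inf_induction huniv (fun _ hA _ hB => hs hA hB) fun _ hT => (mem_filter.1 hT).2.1

lemma mem_leastMemContaining (i : ι) : i ∈ leastMemContaining s i := by
  classical
  unfold leastMemContaining
  exact singleton_subset_iff.1 <|
    Finset.le_inf fun _ hT => singleton_subset_iff.2 (mem_filter.1 hT).2.2

lemma leastMemContaining_subset {T : Finset ι} {i : ι} (hT : T ∈ s) (hi : i ∈ T) :
    leastMemContaining s i ⊆ T := by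
  classical
  exact inf_le (f := id) (mem_filter.2 ⟨mem_univ _, hT, hi⟩)

lemma leastMemContaining_subset_of_mem (hs : InfClosed s) (huniv : univ ∈ s) {i j : ι}
    (hj : j ∈ leastMemContaining s i) : leastMemContaining s j ⊆ leastMemContaining s i :=
  leastMemContaining_subset (leastMemContaining_mem hs huniv i) hj

lemma leastMemContaining_injective
    (hsep : ∀ i j, i ≠ j → ∃ T ∈ s, ¬(i ∈ T ↔ j ∈ T)) :
    Function.Injective (leastMemContaining s) := by
  intro i j hij
  by_contra hne
  obtain ⟨T, hT, hsepT⟩ := hsep i j hne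
  refine hsepT ⟨fun hi => ?_, fun hj => ?_⟩
  · exact leastMemContaining_subset hT hi (hij ▸ mem_leastMemContaining j)
  · exact leastMemContaining_subset hT hj (hij.symm ▸ mem_leastMemContaining i)

end SetLattice

section Ordering

variable {n : ℕ} {s : Set (Finset (Fin n))}

lemma symm_le_of_mem_leastMemContaining (hs : InfClosed s) (huniv : univ ∈ s)
    (hsep : ∀ i j, i ≠ j → ∃ T ∈ s, ¬(i ∈ T ↔ j ∈ T)) {π : Equiv.Perm (Fin n)}
    (hπ : Monotone fun k => #(leastMemContaining s (π k))) {k j : Fin n}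
    (hj : j ∈ leastMemContaining s (π k)) : π.symm j ≤ k := by
  by_contra! hlt
  have hcard := hπ hlt.le
  simp only [Equiv.apply_symm_apply] at hcard
  have hsub := leastMemContaining_subset_of_mem hs huniv hj
  have heq : j = π k :=
    leastMemContaining_injective hsep (eq_of_subset_of_card_le hsub hcard)
  exact hlt.ne (by rw [heq, Equiv.symm_apply_apply])

theorem exists_perm_image_mem_of_isLowerSet (hs : IsSublattice s) (hempty : ∅ ∈ s)
    (huniv : univ ∈ s) (hsep : ∀ i j, i ≠ j → ∃ T ∈ s, ¬(i ∈ T ↔ j ∈ T)) :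
    ∃ π : Equiv.Perm (Fin n), ∀ t : Finset (Fin n), IsLowerSet (t : Set (Fin n)) →
      t.image π ∈ s := by
  refine ⟨Tuple.sort fun i => #(leastMemContaining s i), fun t ht => ?_⟩
  set π := Tuple.sort fun i => #(leastMemContaining s i)
  have himage : t.image π = t.sup fun k => leastMemContaining s (π k) := by
    apply Subset.antisymm
    · rintro _ hm
      obtain ⟨k, hk, rfl⟩ := mem_image.1 hm
      exact mem_sup.2 ⟨k, hk, mem_leastMemContaining _⟩
    · intro m hm
      obtain ⟨k, hk, hmk⟩ := mem_sup.1 hm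
      have hle := symm_le_of_mem_leastMemContaining hs.infClosed huniv hsep
        (Tuple.monotone_sort fun i => #(leastMemContaining s i)) hmk
      exact mem_image.2 ⟨π.symm m, ht hle hk, π.apply_symm_apply m⟩
  rw [himage]
  exact sup_induction hempty (fun _ hA _ hB => hs.supClosed hA hB)
    fun k _ => leastMemContaining_mem hs.infClosed huniv (π k)

end Ordering

section ContraPolymatroid

variable {ι : Type*} {f : Finset ι → ℝ} {R : ι → ℝ}

def tightSets (f : Finset ι → ℝ) (R : ι → ℝ) : Set (Finset ι) :=
  {B | ∑ i ∈ B, R i = f B}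

lemma mem_tightSets {B : Finset ι} : B ∈ tightSets f R ↔ ∑ i ∈ B, R i = f B :=
  Iff.rfl

lemma le_sum_of_forall_nonempty (hempty : f ∅ = 0)
    (hfeas : ∀ B : Finset ι, B.Nonempty → f B ≤ ∑ i ∈ B, R i) (B : Finset ι) :
    f B ≤ ∑ i ∈ B, R i := by
  rcases B.eq_empty_or_nonempty with rfl | hB
  · simp [hempty]
  · exact hfeas B hB

variable [DecidableEq ι]

lemma union_mem_tightSets_and_inter_mem_tightSets (hempty : f ∅ = 0)
    (hsuper : ∀ A B : Finset ι, f A + f B ≤ f (A ∪ B) + f (A ∩ B))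
    (hfeas : ∀ B : Finset ι, B.Nonempty → f B ≤ ∑ i ∈ B, R i) {A B : Finset ι}
    (hA : A ∈ tightSets f R) (hB : B ∈ tightSets f R) :
    A ∪ B ∈ tightSets f R ∧ A ∩ B ∈ tightSets f R := by
  have hunion := le_sum_of_forall_nonempty hempty hfeas (A ∪ B)
  have hinter := le_sum_of_forall_nonempty hempty hfeas (A ∩ B)
  have hsum : ∑ i ∈ A ∪ B, R i + ∑ i ∈ A ∩ B, R i = ∑ i ∈ A, R i + ∑ i ∈ B, R i :=
    sum_union_inter
  have := hsuper A B
  simp only [mem_tightSets] at hA hB ⊢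
  constructor <;> linarith

lemma isSublattice_tightSets (hempty : f ∅ = 0)
    (hsuper : ∀ A B : Finset ι, f A + f B ≤ f (A ∪ B) + f (A ∩ B))
    (hfeas : ∀ B : Finset ι, B.Nonempty → f B ≤ ∑ i ∈ B, R i) :
    IsSublattice (tightSets f R) where
  supClosed _ hA _ hB :=
    (union_mem_tightSets_and_inter_mem_tightSets hempty hsuper hfeas hA hB).1
  infClosed _ hA _ hB :=
    (union_mem_tightSets_and_inter_mem_tightSets hempty hsuper hfeas hA hB).2

lemma sum_add_smul_single_sub_single (R : ι → ℝ) (c : ℝ) (i j : ι) (B : Finset ι) :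
    ∑ k ∈ B, (R + c • (Pi.single i 1 - Pi.single j 1) : ι → ℝ) k =
      ∑ k ∈ B, R k + c * ((if i ∈ B then 1 else 0) - if j ∈ B then 1 else 0) := by
  simp only [Pi.add_apply, Pi.smul_apply, Pi.sub_apply, smul_eq_mul, sum_add_distrib,
    ← mul_sum, sum_sub_distrib, sum_pi_single']

variable [Fintype ι]

/-- `R` lies on the sum-rate face of the contra-polymatroid of `f`. -/
def InBase (f : Finset ι → ℝ) (R : ι → ℝ) : Prop :=
  (∀ B : Finset ι, B.Nonempty → f B ≤ ∑ i ∈ B, R i) ∧ ∑ i, R i = f univ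

lemma inBase_add_smul_single_sub_single (hR : InBase f R) {c : ℝ} {i j : ι}
    (hc : ∀ B : Finset ι, ¬(i ∈ B ↔ j ∈ B) → |c| ≤ ∑ k ∈ B, R k - f B) :
    InBase f (R + c • (Pi.single i 1 - Pi.single j 1)) := by
  refine ⟨fun B hB => ?_, ?_⟩
  · rw [sum_add_smul_single_sub_single]
    have hfB := hR.1 B hB
    by_cases hi : i ∈ B <;> by_cases hj : j ∈ B
    · simp [hi, hj, hfB]
    · have := abs_le.1 (hc B (by simp [hi, hj]))
      simp only [hi, hj, if_true, if_false]
      linarith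
    · have := abs_le.1 (hc B (by simp [hi, hj]))
      simp only [hi, hj, if_true, if_false]
      linarith
    · simp [hi, hj, hfB]
  · rw [sum_add_smul_single_sub_single]
    simp [hR.2]

lemma exists_mem_tightSets_separating (hR : InBase f R)
    (hext : ∀ R₁ R₂ : ι → ℝ, InBase f R₁ → InBase f R₂ →
      R = (fun i => (R₁ i + R₂ i) / 2) → R₁ = R₂)
    {i j : ι} (hij : i ≠ j) : ∃ T ∈ tightSets f R, ¬(i ∈ T ↔ j ∈ T) := by
  by_contra! htight
  obtain ⟨B₀, hB₀, hmin⟩ := exists_min_image {B | ¬(i ∈ B ↔ j ∈ B)}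
    (fun B => ∑ k ∈ B, R k - f B) ⟨{i}, by simp [hij.symm]⟩
  set δ := ∑ k ∈ B₀, R k - f B₀
  have hδ : 0 < δ := by
    have hsepB₀ : ¬(i ∈ B₀ ↔ j ∈ B₀) := (mem_filter.1 hB₀).2
    have hne : B₀.Nonempty := by
      by_cases hi : i ∈ B₀
      · exact ⟨i, hi⟩
      · exact ⟨j, by tauto⟩
    have hnot : B₀ ∉ tightSets f R := fun h => hsepB₀ (htight B₀ h)
    simp only [mem_tightSets] at hnot
    have := hR.1 B₀ hne
    exact sub_pos.2 (lt_of_le_of_ne this (Ne.symm hnot))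
  have hslack : ∀ c, |c| = δ → ∀ B : Finset ι, ¬(i ∈ B ↔ j ∈ B) →
      |c| ≤ ∑ k ∈ B, R k - f B :=
    fun c hc B hB => hc ▸ hmin B (by simpa using hB)
  have heq := hext _ _ (inBase_add_smul_single_sub_single hR (hslack δ (abs_of_pos hδ)))
    (inBase_add_smul_single_sub_single hR (hslack (-δ) (by simp [abs_of_pos hδ])))
    (by ext k; simp only [Pi.add_apply, Pi.smul_apply, smul_eq_mul]; ring)
  have := congrFun heq i
  simp [hij] at this
  linarith

end ContraPolymatroid

theorem extreme_point_of_base_is_greedy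
    (n : ℕ) (f : Finset (Fin n) → ℝ) (R : Fin n → ℝ)
    (hnorm : f ∅ = 0)
    (hsuper : ∀ A B : Finset (Fin n), f A + f B ≤ f (A ∪ B) + f (A ∩ B))
    (hfeas : ∀ B : Finset (Fin n), B.Nonempty → f B ≤ ∑ i ∈ B, R i)
    (hsum : ∑ i, R i = f Finset.univ)
    (hext : ∀ R₁ R₂ : Fin n → ℝ,
      ((∀ B : Finset (Fin n), B.Nonempty → f B ≤ ∑ i ∈ B, R₁ i) ∧
        ∑ i, R₁ i = f Finset.univ) →
      ((∀ B : Finset (Fin n), B.Nonempty → f B ≤ ∑ i ∈ B, R₂ i) ∧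
        ∑ i, R₂ i = f Finset.univ) →
      R = (fun i => (R₁ i + R₂ i) / 2) → R₁ = R₂) :
    ∃ π : Equiv.Perm (Fin n), ∀ i : Fin n,
      R (π i) = f ((Finset.univ.filter (fun k => k ≤ i)).image π)
        - f ((Finset.univ.filter (fun k => k < i)).image π) := by
  obtain ⟨π, hπ⟩ := exists_perm_image_mem_of_isLowerSet
    (isSublattice_tightSets hnorm hsuper hfeas) (by simp [tightSets, hnorm]) hsum
    fun i j hij => exists_mem_tightSets_separating ⟨hfeas, hsum⟩ hext hij
  refine ⟨π, fun i => ?_⟩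
  have hle : ∑ k ∈ (Iic i).image π, R k = f ((Iic i).image π) :=
    hπ _ (by simpa using isLowerSet_Iic i)
  have hlt : ∑ k ∈ (Iio i).image π, R k = f ((Iio i).image π) :=
    hπ _ (by simpa using isLowerSet_Iio i)
  rw [filter_ge_eq_Iic, filter_gt_eq_Iio, ← hle, ← hlt, ← Iio_insert, image_insert,
    sum_insert (by simp)]
  ring
end
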